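/- arXiv:2006.07788 — 3 statements merged into one kernel-verified Lean document; each statement's English description precedes it below -/
import Mathlib

section
/- Let ε₀ > 1 be a real number. There exists a natural number K such that the map k ↦ p(k) is monotone nondecreasing for k ≥ K: for all integers k₂ ≥ k₁ ≥ K, p(k₁) ≤ p(k₂). (This is the paper's Theorem 1: for windows with causalities, the probability P(F(k) > 1) that the naive window-level Granger F-statistic exceeds the threshold is monotone increasing in the window length k once k is sufficiently large.) -/
/-
With `a = k/2`, `r₁ = 1/(2ε₀)` and `r₂ = 1/2`, conditioning on the first coordinate gives
`P(X ≤ Y) = ∫_{w > 1} f_a(w) dw`, where `f_a` is the density of the ratio `Y/X` of independent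
`Γ(a, r₁)` and `Γ(a, r₂)` variables, `f_a(w) ∝ w^(a-1) (r₁ + r₂ w)^(-2a)`. Raising `a` by `1/2`
multiplies `f_a(w)` by `2a Γ(a)²/Γ(a+1/2)² · √(r₁ r₂ w)/(r₁ + r₂ w)`. Log-convexity of `Γ`
bounds the first factor by `2a/(a - 1/2)`, and for `w ≥ 1` and `r₁ < r₂` the second is at most
`√(r₁ r₂)/(r₁ + r₂) < 1/2` (strict AM-GM). Hence for large `a` the density decreases pointwise
on `(1, ∞)`, so `P(X > Y)` increases from `k` to `k + 1`.
-/

open MeasureTheory ProbabilityTheory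

/-- `p ε₀ k` is the probability of the event `{(x, y) : x > y}` under the product of the
Gamma distribution with shape `k/2` and rate `1/(2ε₀)` (the law of the sum of squares of
`k` i.i.d. centered Gaussians with variance `ε₀`) and the Gamma distribution with shape
`k/2` and rate `1/2` (the chi-square distribution with `k` degrees of freedom).
It is the probability that the window-level F-statistic of the naive DWGC method exceeds
the threshold `1` for a window of length `k` when the expected F-ratio is `ε₀`. -/
noncomputable def naiveDWGCDetectProb (ε₀ : ℝ) (k : ℕ) : ℝ :=
  (((gammaMeasure ((k : ℝ) / 2) (1 / (2 * ε₀))).prod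
      (gammaMeasure ((k : ℝ) / 2) (1 / 2)))
    {q : ℝ × ℝ | q.1 > q.2}).toReal

open Filter Real Set
open scoped ENNReal

lemma lintegral_Ioi_eq_ofReal_mul_lintegral_comp_mul (f : ℝ → ℝ≥0∞) {c : ℝ} (hc : 0 < c)
    (s : ℝ) :
    ∫⁻ y in Ioi s, f y = ENNReal.ofReal c * ∫⁻ w in Ioi (s / c), f (c * w) := by
  have hmap : volume.restrict (Ioi s) =
      ENNReal.ofReal c • (volume.restrict (Ioi (s / c))).map (c * ·) := by
    conv_lhs => rw [← Real.smul_map_volume_mul_left hc.ne']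
    rw [abs_of_pos hc, Measure.restrict_smul,
      Measure.restrict_map (measurable_const_mul c) measurableSet_Ioi,
      preimage_const_mul_Ioi₀ _ hc]
  rw [hmap, lintegral_smul_measure, smul_eq_mul]
  exact congrArg _ ((Homeomorph.mulLeft₀ c hc.ne').measurableEmbedding.lintegral_map f)

lemma Real.Gamma_sq_mul_le_Gamma_add_half_sq {a : ℝ} (ha : 1 / 2 < a) :
    Gamma a ^ 2 * (a - 1 / 2) ≤ Gamma (a + 1 / 2) ^ 2 := by
  have hm : 0 < a - 1 / 2 := by linarith
  have hp : 0 < a + 1 / 2 := by linarith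
  have hGm := Gamma_pos_of_pos hm
  have hGp := Gamma_pos_of_pos hp
  have hlogconvex : Gamma a ^ 2 ≤ Gamma (a - 1 / 2) * Gamma (a + 1 / 2) := by
    have h := Gamma_mul_add_mul_le_rpow_Gamma_mul_rpow_Gamma hm hp one_half_pos one_half_pos
      (add_halves 1)
    rw [show 1 / 2 * (a - 1 / 2) + 1 / 2 * (a + 1 / 2) = a by ring,
      ← mul_rpow hGm.le hGp.le, ← sqrt_eq_rpow] at h
    have h2 := pow_le_pow_left₀ (Gamma_pos_of_pos (by linarith)).le h 2
    rwa [sq_sqrt (mul_pos hGm hGp).le] at h2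
  have hrec : Gamma (a + 1 / 2) = (a - 1 / 2) * Gamma (a - 1 / 2) := by
    rw [← Gamma_add_one hm.ne']
    ring_nf
  nlinarith

namespace ProbabilityTheory

variable {a r r₁ r₂ : ℝ}

@[fun_prop]
lemma measurable_gammaPDF (a r : ℝ) : Measurable (gammaPDF a r) :=
  (measurable_gammaPDFReal a r).ennreal_ofReal

lemma gammaMeasure_eq_withDensity_restrict_Ioi (a r : ℝ) :
    gammaMeasure a r = (volume.restrict (Ioi 0)).withDensity (gammaPDF a r) := by
  rw [restrict_Ioi_eq_restrict_Ici, ← withDensity_indicator measurableSet_Ici, gammaMeasure]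
  congr 1 with x
  rcases lt_or_ge x 0 with hx | hx
  · simp [gammaPDF_of_neg hx, hx]
  · simp [hx]

lemma setLIntegral_Ioi_gammaPDF_eq_one (ha : 0 < a) (hr : 0 < r) :
    ∫⁻ x in Ioi 0, gammaPDF a r x = 1 := by
  have := (isProbabilityMeasure_gammaMeasure ha hr).measure_univ
  rwa [gammaMeasure_eq_withDensity_restrict_Ioi, withDensity_apply _ MeasurableSet.univ,
    Measure.restrict_univ] at this

/-- For `w > 0`, the density at `w` of `Y / X` for independent `X ∼ Γ(a, r₁)`, `Y ∼ Γ(a, r₂)`. -/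
noncomputable def gammaRatioPDFReal (a r₁ r₂ w : ℝ) : ℝ :=
  (r₁ * r₂) ^ a * Gamma (2 * a) / Gamma a ^ 2 * (w ^ (a - 1) * (r₁ + r₂ * w) ^ (-(2 * a)))

lemma gammaRatioPDFReal_nonneg (ha : 0 < a) (hr₁ : 0 < r₁) (hr₂ : 0 < r₂) {w : ℝ}
    (hw : 0 < w) : 0 ≤ gammaRatioPDFReal a r₁ r₂ w := by
  unfold gammaRatioPDFReal
  have := Gamma_pos_of_pos (by linarith : 0 < 2 * a)
  positivity

lemma gammaPDFReal_mul_self_mul_gammaPDFReal_mul (ha : 0 < a) (hr₁ : 0 < r₁) (hr₂ : 0 < r₂)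
    {x w : ℝ} (hx : 0 < x) (hw : 0 < w) :
    gammaPDFReal a r₁ x * x * gammaPDFReal a r₂ (x * w) =
      gammaRatioPDFReal a r₁ r₂ w * gammaPDFReal (2 * a) (r₁ + r₂ * w) x := by
  have hc : 0 < r₁ + r₂ * w := by positivity
  have hG : Gamma (2 * a) ≠ 0 := (Gamma_pos_of_pos (by linarith)).ne'
  have hc' : (r₁ + r₂ * w) ^ (2 * a) ≠ 0 := (rpow_pos_of_pos hc _).ne'
  simp only [gammaPDFReal, gammaRatioPDFReal, if_pos hx.le, if_pos (mul_pos hx hw).le]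
  rw [mul_rpow hx.le hw.le, mul_rpow hr₁.le hr₂.le,
    show 2 * a - 1 = (a - 1) + (a - 1) + 1 by ring, rpow_add hx, rpow_add hx, rpow_one,
    show -((r₁ + r₂ * w) * x) = -(r₁ * x) + -(r₂ * (x * w)) by ring, exp_add,
    rpow_neg hc.le]
  field_simp

lemma setLIntegral_gammaPDF_mul_gammaPDF_mul (ha : 0 < a) (hr₁ : 0 < r₁) (hr₂ : 0 < r₂)
    {w : ℝ} (hw : 0 < w) :
    ∫⁻ x in Ioi 0, gammaPDF a r₁ x * ENNReal.ofReal x * gammaPDF a r₂ (x * w) =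
      ENNReal.ofReal (gammaRatioPDFReal a r₁ r₂ w) := by
  have hc : 0 < r₁ + r₂ * w := by positivity
  calc ∫⁻ x in Ioi 0, gammaPDF a r₁ x * ENNReal.ofReal x * gammaPDF a r₂ (x * w)
      = ∫⁻ x in Ioi 0, ENNReal.ofReal (gammaRatioPDFReal a r₁ r₂ w) *
          gammaPDF (2 * a) (r₁ + r₂ * w) x := by
        refine setLIntegral_congr_fun measurableSet_Ioi fun x (hx : 0 < x) => ?_
        rw [gammaPDF, gammaPDF, gammaPDF, ← ENNReal.ofReal_mul (gammaPDFReal_nonneg ha hr₁ x),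
          ← ENNReal.ofReal_mul (mul_nonneg (gammaPDFReal_nonneg ha hr₁ x) hx.le),
          ← ENNReal.ofReal_mul (gammaRatioPDFReal_nonneg ha hr₁ hr₂ hw),
          gammaPDFReal_mul_self_mul_gammaPDFReal_mul ha hr₁ hr₂ hx hw]
    _ = ENNReal.ofReal (gammaRatioPDFReal a r₁ r₂ w) := by
        rw [lintegral_const_mul' _ _ ENNReal.ofReal_ne_top,
          setLIntegral_Ioi_gammaPDF_eq_one (by linarith) hc, mul_one]

lemma gammaMeasure_Ici_eq_ofReal_mul_lintegral {x : ℝ} (hx : 0 < x) :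
    gammaMeasure a r (Ici x) = ENNReal.ofReal x * ∫⁻ w in Ioi 1, gammaPDF a r (x * w) := by
  rw [gammaMeasure, withDensity_apply _ measurableSet_Ici, ← restrict_Ioi_eq_restrict_Ici,
    lintegral_Ioi_eq_ofReal_mul_lintegral_comp_mul _ hx, div_self hx.ne']

/-- Conditioning on `X = x` and substituting `Y = x w` turns `P(X ≤ Y)` into the integral over
`w > 1` of the density of `Y / X`. -/
lemma gammaMeasure_prod_setOf_le (ha : 0 < a) (hr₁ : 0 < r₁) (hr₂ : 0 < r₂) :
    ((gammaMeasure a r₁).prod (gammaMeasure a r₂)) {q : ℝ × ℝ | q.1 ≤ q.2} =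
      ∫⁻ w in Ioi 1, ENNReal.ofReal (gammaRatioPDFReal a r₁ r₂ w) := by
  have := isProbabilityMeasure_gammaMeasure ha hr₂
  have hanti : Measurable fun x : ℝ => gammaMeasure a r₂ (Ici x) :=
    Antitone.measurable fun s t hst => measure_mono (Ici_subset_Ici.mpr hst)
  calc ((gammaMeasure a r₁).prod (gammaMeasure a r₂)) {q : ℝ × ℝ | q.1 ≤ q.2}
      = ∫⁻ x in Ioi 0, gammaPDF a r₁ x * gammaMeasure a r₂ (Ici x) := by
        rw [Measure.prod_apply (measurableSet_le measurable_fst measurable_snd),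
          gammaMeasure_eq_withDensity_restrict_Ioi a r₁]
        exact lintegral_withDensity_eq_lintegral_mul _ (measurable_gammaPDF a r₁) hanti
    _ = ∫⁻ x in Ioi 0, ∫⁻ w in Ioi 1,
          gammaPDF a r₁ x * ENNReal.ofReal x * gammaPDF a r₂ (x * w) := by
        refine setLIntegral_congr_fun measurableSet_Ioi fun x (hx : 0 < x) => ?_
        rw [gammaMeasure_Ici_eq_ofReal_mul_lintegral hx, ← mul_assoc,
          lintegral_const_mul _ (by fun_prop)]
    _ = ∫⁻ w in Ioi 1, ∫⁻ x in Ioi 0,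
          gammaPDF a r₁ x * ENNReal.ofReal x * gammaPDF a r₂ (x * w) :=
        lintegral_lintegral_swap (by fun_prop)
    _ = ∫⁻ w in Ioi 1, ENNReal.ofReal (gammaRatioPDFReal a r₁ r₂ w) :=
        setLIntegral_congr_fun measurableSet_Ioi fun w (hw : 1 < w) =>
          setLIntegral_gammaPDF_mul_gammaPDF_mul ha hr₁ hr₂ (by linarith)

lemma gammaMeasure_prod_setOf_gt (ha : 0 < a) (hr₁ : 0 < r₁) (hr₂ : 0 < r₂) :
    ((gammaMeasure a r₁).prod (gammaMeasure a r₂)) {q : ℝ × ℝ | q.1 > q.2} =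
      1 - ∫⁻ w in Ioi 1, ENNReal.ofReal (gammaRatioPDFReal a r₁ r₂ w) := by
  have := isProbabilityMeasure_gammaMeasure ha hr₁
  have := isProbabilityMeasure_gammaMeasure ha hr₂
  have hcompl : {q : ℝ × ℝ | q.1 > q.2} = {q : ℝ × ℝ | q.1 ≤ q.2}ᶜ := by
    ext q; simp
  rw [hcompl, prob_compl_eq_one_sub (measurableSet_le measurable_fst measurable_snd),
    gammaMeasure_prod_setOf_le ha hr₁ hr₂]

lemma gammaRatioPDFReal_add_half (ha : 0 < a) (hr₁ : 0 < r₁) (hr₂ : 0 < r₂) {w : ℝ}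
    (hw : 0 < w) :
    gammaRatioPDFReal (a + 1 / 2) r₁ r₂ w =
      2 * a * Gamma a ^ 2 / Gamma (a + 1 / 2) ^ 2 * (√(r₁ * r₂ * w) / (r₁ + r₂ * w)) *
        gammaRatioPDFReal a r₁ r₂ w := by
  have hc : 0 < r₁ + r₂ * w := by positivity
  have hGa := Gamma_pos_of_pos ha
  have hGa' := Gamma_pos_of_pos (by linarith : 0 < a + 1 / 2)
  have hG2 : Gamma (2 * (a + 1 / 2)) = 2 * a * Gamma (2 * a) := by
    rw [show 2 * (a + 1 / 2) = 2 * a + 1 by ring, Gamma_add_one (by positivity)]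
  unfold gammaRatioPDFReal
  rw [hG2, sqrt_eq_rpow, mul_rpow (by positivity) hw.le,
    show a + 1 / 2 - 1 = a - 1 + 1 / 2 by ring, rpow_add hw, rpow_add (by positivity : 0 < r₁ * r₂),
    show -(2 * (a + 1 / 2)) = -(2 * a) + -1 by ring, rpow_add hc, rpow_neg_one]
  field_simp

lemma sqrt_mul_mul_div_add_mul_le (hr₁ : 0 < r₁) (h : r₁ ≤ r₂) {w : ℝ} (hw : 1 ≤ w) :
    √(r₁ * r₂ * w) / (r₁ + r₂ * w) ≤ √(r₁ * r₂) / (r₁ + r₂) := by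
  have hr₂ : 0 < r₂ := hr₁.trans_le h
  rw [sqrt_mul (by positivity) w, div_le_div_iff₀ (by positivity) (by positivity), mul_assoc]
  refine mul_le_mul_of_nonneg_left ?_ (sqrt_nonneg _)
  have ht : 1 ≤ √w := one_le_sqrt.mpr hw
  have htt : √w * √w = w := mul_self_sqrt (by linarith)
  -- `r₁ + r₂ w - √w (r₁ + r₂) = (√w - 1) (r₂ √w - r₁)`
  nlinarith [mul_nonneg (sub_nonneg.mpr ht) (sub_nonneg.mpr (h.trans (le_mul_of_one_le_right
    hr₂.le ht)))]

lemma gammaRatioPDFReal_add_half_le (hr₁ : 0 < r₁) (h : r₁ ≤ r₂) (ha : 1 / 2 < a)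
    (hcond : 2 * a * √(r₁ * r₂) ≤ (a - 1 / 2) * (r₁ + r₂)) {w : ℝ} (hw : 1 ≤ w) :
    gammaRatioPDFReal (a + 1 / 2) r₁ r₂ w ≤ gammaRatioPDFReal a r₁ r₂ w := by
  have ha₀ : 0 < a := by linarith
  have hr₂ : 0 < r₂ := by linarith
  have hGa := Gamma_pos_of_pos ha₀
  have hGa' := Gamma_pos_of_pos (by linarith : 0 < a + 1 / 2)
  rw [gammaRatioPDFReal_add_half ha₀ hr₁ hr₂ (by linarith)]
  refine mul_le_of_le_one_left (gammaRatioPDFReal_nonneg ha₀ hr₁ hr₂ (by linarith)) ?_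
  have hGamma : 2 * a * Gamma a ^ 2 / Gamma (a + 1 / 2) ^ 2 ≤ 2 * a / (a - 1 / 2) := by
    rw [div_le_div_iff₀ (by positivity) (by linarith)]
    nlinarith [Real.Gamma_sq_mul_le_Gamma_add_half_sq ha]
  calc 2 * a * Gamma a ^ 2 / Gamma (a + 1 / 2) ^ 2 * (√(r₁ * r₂ * w) / (r₁ + r₂ * w))
      ≤ 2 * a / (a - 1 / 2) * (√(r₁ * r₂) / (r₁ + r₂)) :=
        mul_le_mul hGamma (sqrt_mul_mul_div_add_mul_le hr₁ h hw) (by positivity)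
          (div_nonneg (by linarith) (by linarith))
    _ ≤ 1 := by
        rw [div_mul_div_comm, div_le_one (by nlinarith)]
        linarith

lemma gammaMeasure_prod_real_setOf_gt_le_add_half (hr₁ : 0 < r₁) (h : r₁ ≤ r₂)
    (ha : 1 / 2 < a) (hcond : 2 * a * √(r₁ * r₂) ≤ (a - 1 / 2) * (r₁ + r₂)) :
    ((gammaMeasure a r₁).prod (gammaMeasure a r₂)).real {q : ℝ × ℝ | q.1 > q.2} ≤
      ((gammaMeasure (a + 1 / 2) r₁).prod (gammaMeasure (a + 1 / 2) r₂)).real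
        {q : ℝ × ℝ | q.1 > q.2} := by
  have hr₂ : 0 < r₂ := by linarith
  rw [measureReal_def, measureReal_def, gammaMeasure_prod_setOf_gt (by linarith) hr₁ hr₂,
    gammaMeasure_prod_setOf_gt (by linarith) hr₁ hr₂]
  refine ENNReal.toReal_mono (ne_top_of_le_ne_top ENNReal.one_ne_top tsub_le_self)
    (tsub_le_tsub_left ?_ 1)
  exact setLIntegral_mono' measurableSet_Ioi fun w hw =>
    ENNReal.ofReal_le_ofReal (gammaRatioPDFReal_add_half_le hr₁ h ha hcond (le_of_lt hw))

lemma eventually_two_mul_mul_sqrt_le (hr₁ : 0 < r₁) (h : r₁ < r₂) :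
    ∀ᶠ a in atTop, 2 * a * √(r₁ * r₂) ≤ (a - 1 / 2) * (r₁ + r₂) := by
  have hamgm : 2 * √(r₁ * r₂) < r₁ + r₂ := by
    have hlt : √r₁ < √r₂ := sqrt_lt_sqrt hr₁.le h
    rw [sqrt_mul hr₁.le]
    nlinarith [sq_sqrt hr₁.le, sq_sqrt (hr₁.trans h).le]
  filter_upwards [eventually_ge_atTop ((r₁ + r₂) / (2 * (r₁ + r₂ - 2 * √(r₁ * r₂))))]
    with a ha
  rw [div_le_iff₀ (by linarith)] at ha
  linarith

lemma eventually_gammaMeasure_prod_real_setOf_gt_le_add_half (hr₁ : 0 < r₁) (h : r₁ < r₂) :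
    ∀ᶠ a in atTop,
      ((gammaMeasure a r₁).prod (gammaMeasure a r₂)).real {q : ℝ × ℝ | q.1 > q.2} ≤
        ((gammaMeasure (a + 1 / 2) r₁).prod (gammaMeasure (a + 1 / 2) r₂)).real
          {q : ℝ × ℝ | q.1 > q.2} := by
  filter_upwards [eventually_gt_atTop (1 / 2), eventually_two_mul_mul_sqrt_le hr₁ h]
    with a ha hcond
  exact gammaMeasure_prod_real_setOf_gt_le_add_half hr₁ h.le ha hcond

end ProbabilityTheory

/-- **Theorem 1 of the paper.** For windows with causalities (expected F-ratio `ε₀ > 1`),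
the probability that the naive window-level Granger F-statistic exceeds the threshold is
monotone nondecreasing in the window length `k`, once `k` is sufficiently large. -/
theorem naiveDWGCDetectProb_eventually_monotone (ε₀ : ℝ) (hε₀ : 1 < ε₀) :
    ∃ K : ℕ, ∀ k₁ k₂ : ℕ, K ≤ k₁ → k₁ ≤ k₂ →
      naiveDWGCDetectProb ε₀ k₁ ≤ naiveDWGCDetectProb ε₀ k₂ := by
  have hr : 1 / (2 * ε₀) < 1 / 2 := one_div_lt_one_div_of_lt two_pos (by linarith)
  have hhalf : Tendsto (fun k : ℕ => (k : ℝ) / 2) atTop atTop :=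
    tendsto_natCast_atTop_atTop.atTop_div_const two_pos
  have hstep : ∀ᶠ k : ℕ in atTop,
      naiveDWGCDetectProb ε₀ k ≤ naiveDWGCDetectProb ε₀ (k + 1) := by
    filter_upwards [hhalf.eventually (eventually_gammaMeasure_prod_real_setOf_gt_le_add_half
      (one_div_pos.mpr (by linarith)) hr)] with k hk
    rwa [naiveDWGCDetectProb, naiveDWGCDetectProb, Nat.cast_succ, add_div]
  obtain ⟨K, hK⟩ := eventually_atTop.mp hstep
  exact ⟨K, fun k₁ k₂ h₁ h₁₂ => monotoneOn_nat_Ici_of_le_succ hK h₁ (h₁.trans h₁₂) h₁₂⟩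
end

section
/- Let ε₀ > 1 be a real number. For every positive integer k, p(k) = 1 − ∑_{m=0}^∞ Γ(k+m) · (1/ε₀)^{k/2+m} / ((1/ε₀ + 1)^{k+m} · Γ(k/2) · Γ(k/2+m+1)), where Γ is the real Gamma function and the series on the right-hand side converges. -/
/-!
Let `X ~ Γ(c, r)` and `Y ~ Γ(d, s)` be independent. Writing `e^{-rx} = e^{-ry} e^{r(y-x)}` in
the density of `X`, expanding the second factor as a power series and integrating term by term
(Beta integrals) gives the Poisson-type expansion of the Gamma distribution function,
`P(X ≤ y) = ∑ₙ e^{-ry} (ry)^{c+n} / Γ(c+n+1)`. Integrating each term against the density of `Y`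
is a Gamma integral, so
`P(X ≤ Y) = ∑ₙ Γ(c+d+n) / (Γ(d) Γ(c+n+1)) (r/(r+s))^{c+n} (s/(r+s))^d`.
With `c = d = k/2`, `r = 1/(2ε₀)` and `s = 1/2` this is the series of the statement, and `p(k)`
is the complementary probability.
-/

open MeasureTheory ProbabilityTheory

open Real Set
open scoped ENNReal Nat

lemma integrableOn_rpow_mul_sub_pow_Ioc {c : ℝ} (hc : 0 < c) (n : ℕ) (y : ℝ) :
    IntegrableOn (fun x : ℝ => x ^ (c - 1) * (y - x) ^ n) (Ioc 0 y) := by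
  rcases le_or_gt y 0 with hy | hy
  · simp [Ioc_eq_empty_of_le hy]
  rw [← integrableOn_Icc_iff_integrableOn_Ioc]
  refine IntegrableOn.mul_continuousOn ?_ (by fun_prop) isCompact_Icc
  exact (intervalIntegrable_iff_integrableOn_Icc_of_le hy.le).mp
    (intervalIntegral.intervalIntegrable_rpow' (by linarith))

lemma integral_rpow_mul_sub_pow_Ioc {y : ℝ} (hy : 0 ≤ y) (n : ℕ) {c : ℝ} (hc : 0 < c) :
    ∫ x in Ioc 0 y, x ^ (c - 1) * (y - x) ^ n =
      y ^ c * y ^ n * n ! * Gamma c / Gamma (c + n + 1) := by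
  induction n generalizing c with
  | zero =>
    rw [← intervalIntegral.integral_of_le hy]
    simp only [pow_zero, mul_one, Nat.factorial_zero, Nat.cast_one, Nat.cast_zero, add_zero,
      Gamma_add_one hc.ne', integral_rpow (Or.inl (by linarith : -1 < c - 1)), sub_add_cancel,
      zero_rpow hc.ne', sub_zero]
    field_simp
  | succ n ih =>
    have hsplit : ∀ x ∈ Ioc (0 : ℝ) y, x ^ (c - 1) * (y - x) ^ (n + 1) =
        y * (x ^ (c - 1) * (y - x) ^ n) - x ^ (c + 1 - 1) * (y - x) ^ n := fun x hx => by
      rw [add_sub_cancel_right, show c = c - 1 + 1 by ring, rpow_add_one hx.1.ne']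
      ring_nf
    rw [setIntegral_congr_fun measurableSet_Ioc hsplit,
      integral_sub ((integrableOn_rpow_mul_sub_pow_Ioc hc n y).const_mul y)
        (integrableOn_rpow_mul_sub_pow_Ioc (by linarith) n y),
      integral_const_mul, ih hc, ih (by linarith), rpow_add_one' hy (by linarith)]
    push_cast [Nat.factorial_succ]
    rw [show c + (n + 1 : ℝ) + 1 = c + n + 1 + 1 by ring,
      show c + 1 + n + 1 = c + n + 1 + 1 by ring,
      Gamma_add_one (s := c + n + 1) (by positivity), Gamma_add_one hc.ne']
    have : Gamma (c + n + 1) ≠ 0 := by positivity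
    field_simp
    ring

lemma integrableOn_rpow_mul_exp_neg_mul_Ioi {a b : ℝ} (ha : 0 < a) (hb : 0 < b) :
    IntegrableOn (fun y : ℝ => y ^ (a - 1) * exp (-(b * y))) (Ioi 0) := by
  simpa only [rpow_one, neg_mul] using
    integrableOn_rpow_mul_exp_neg_mul_rpow (by linarith : -1 < a - 1) zero_lt_one hb

lemma div_add_rpow_mul_div_add_rpow {r s : ℝ} (hr : 0 ≤ r) (hs : 0 < s) (x y : ℝ) :
    (r / (r + s)) ^ x * (s / (r + s)) ^ y = (r / s) ^ x / (r / s + 1) ^ (x + y) := by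
  have hrs : 0 < r / s + 1 := by positivity
  rw [show r / (r + s) = (r / s) / (r / s + 1) by field_simp,
    show s / (r + s) = 1 / (r / s + 1) by field_simp, div_rpow (by positivity) hrs.le,
    div_rpow zero_le_one hrs.le, one_rpow, rpow_add hrs]
  field_simp

namespace ProbabilityTheory

lemma hasSum_gammaPDFReal {c r x : ℝ} (hx : 0 ≤ x) (y : ℝ) :
    HasSum (fun n : ℕ => r ^ c / Gamma c * exp (-(r * y)) * (r ^ n / n !) *
      (x ^ (c - 1) * (y - x) ^ n)) (gammaPDFReal c r x) := by
  have hpdf : gammaPDFReal c r x =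
      r ^ c / Gamma c * exp (-(r * y)) * x ^ (c - 1) * exp (r * (y - x)) := by
    rw [gammaPDFReal, if_pos hx, show -(r * x) = -(r * y) + r * (y - x) by ring, exp_add]
    ring
  have hexp := NormedSpace.expSeries_div_hasSum_exp (r * (y - x))
  rw [← exp_eq_exp_ℝ] at hexp
  rw [hpdf]
  exact (hexp.mul_left _).congr_fun fun n => by rw [mul_pow]; ring

lemma gammaMeasure_Iic_eq_tsum {c r y : ℝ} (hc : 0 < c) (hr : 0 ≤ r) (hy : 0 ≤ y) :
    gammaMeasure c r (Iic y) =
      ∑' n : ℕ, ENNReal.ofReal ((r * y) ^ (c + n) * exp (-(r * y)) / Gamma (c + n + 1)) := by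
  set K : ℕ → ℝ := fun n => r ^ c / Gamma c * exp (-(r * y)) * (r ^ n / n !)
  have hK : ∀ n, 0 ≤ K n := fun n => by positivity
  have hterm_nonneg : ∀ n, ∀ x ∈ Ioc 0 y, 0 ≤ K n * (x ^ (c - 1) * (y - x) ^ n) :=
    fun n x hx => mul_nonneg (hK n)
      (mul_nonneg (rpow_nonneg hx.1.le _) (pow_nonneg (sub_nonneg.2 hx.2) n))
  have hIic : gammaMeasure c r (Iic y) = ∫⁻ x in Ioc 0 y, gammaPDF c r x := by
    rw [gammaMeasure, withDensity_apply _ measurableSet_Iic, ← Iic_union_Ioc_eq_Iic hy,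
      lintegral_union measurableSet_Ioc (Iic_disjoint_Ioc le_rfl),
      ← setLIntegral_congr Iio_ae_eq_Iic, lintegral_gammaPDF_of_nonpos le_rfl, zero_add]
  have hpdf : ∀ x ∈ Ioc 0 y,
      gammaPDF c r x = ∑' n, ENNReal.ofReal (K n * (x ^ (c - 1) * (y - x) ^ n)) := fun x hx => by
    have hsum := hasSum_gammaPDFReal (c := c) (r := r) hx.1.le y
    rw [gammaPDF, ← hsum.tsum_eq, ENNReal.ofReal_tsum_of_nonneg
      (fun n => hterm_nonneg n x hx) hsum.summable]
  rw [hIic, setLIntegral_congr_fun measurableSet_Ioc hpdf, lintegral_tsum fun n => by fun_prop]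
  refine tsum_congr fun n => ?_
  rw [← ofReal_integral_eq_lintegral_ofReal
      ((integrableOn_rpow_mul_sub_pow_Ioc hc n y).const_mul (K n))
      ((ae_restrict_iff' measurableSet_Ioc).2 (ae_of_all _ (hterm_nonneg n))),
    integral_const_mul, integral_rpow_mul_sub_pow_Ioc hy n hc, mul_rpow hr hy,
    rpow_add' hr (by positivity), rpow_add' hy (by positivity), rpow_natCast, rpow_natCast]
  have : Gamma c ≠ 0 := by positivity
  simp only [K]
  field_simp

lemma setLIntegral_gammaPDF_mul_rpow_mul_exp_div_Gamma {c d r s : ℝ} (hc : 0 ≤ c) (hd : 0 < d)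
    (hr : 0 ≤ r) (hs : 0 < s) (n : ℕ) :
    ∫⁻ y in Ioi 0, gammaPDF d s y *
        ENNReal.ofReal ((r * y) ^ (c + n) * exp (-(r * y)) / Gamma (c + n + 1)) =
      ENNReal.ofReal (Gamma (c + d + n) / (Gamma d * Gamma (c + n + 1)) *
        ((r / (r + s)) ^ (c + n) * (s / (r + s)) ^ d)) := by
  set C := s ^ d * r ^ (c + n) / (Gamma d * Gamma (c + n + 1))
  have hrs : 0 < r + s := by positivity
  have hpt : ∀ y ∈ Ioi (0 : ℝ), gammaPDF d s y *
      ENNReal.ofReal ((r * y) ^ (c + n) * exp (-(r * y)) / Gamma (c + n + 1)) =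
      ENNReal.ofReal (C * (y ^ (c + d + n - 1) * exp (-((r + s) * y)))) :=
      fun y (hy : 0 < y) => by
    rw [gammaPDF_of_nonneg hy.le, ← ENNReal.ofReal_mul (by positivity), mul_rpow hr hy.le,
      show c + d + n - 1 = (d - 1) + (c + n) by ring, rpow_add hy (d - 1),
      show -((r + s) * y) = -(s * y) + -(r * y) by ring, exp_add]
    congr 1
    simp only [C]
    field_simp
  rw [setLIntegral_congr_fun measurableSet_Ioi hpt, ← ofReal_integral_eq_lintegral_ofReal
      ((integrableOn_rpow_mul_exp_neg_mul_Ioi (by positivity) hrs).const_mul C) ?_,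
    integral_const_mul, integral_rpow_mul_exp_neg_mul_Ioi (by positivity) hrs]
  · congr 1
    rw [div_rpow hr hrs.le, div_rpow hs.le hrs.le, div_rpow zero_le_one hrs.le, one_rpow,
      show c + d + n = (c + n) + d by ring, rpow_add hrs]
    simp only [C]
    field_simp
  · exact (ae_restrict_iff' measurableSet_Ioi).2 (ae_of_all _ fun y (hy : 0 < y) => by positivity)

instance (a r : ℝ) : SFinite (gammaMeasure a r) := by
  unfold gammaMeasure; infer_instance

theorem prod_gammaMeasure_setOf_le_eq_tsum {c d r s : ℝ} (hc : 0 < c) (hd : 0 < d) (hr : 0 ≤ r)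
    (hs : 0 < s) :
    ((gammaMeasure c r).prod (gammaMeasure d s)) {q : ℝ × ℝ | q.1 ≤ q.2} =
      ∑' n : ℕ, ENNReal.ofReal (Gamma (c + d + n) / (Gamma d * Gamma (c + n + 1)) *
        ((r / (r + s)) ^ (c + n) * (s / (r + s)) ^ d)) := by
  have hcdf : Measurable fun y => gammaMeasure c r (Iic y) :=
    Monotone.measurable fun _ _ h => measure_mono (Iic_subset_Iic.2 h)
  have hpdf : Measurable (gammaPDF d s) := (measurable_gammaPDFReal d s).ennreal_ofReal
  have hsupp : (fun y => gammaPDF d s y * gammaMeasure c r (Iic y)).support ⊆ Ici 0 :=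
    fun y hy => mem_Ici.2 <| not_lt.1 fun hneg => hy (by simp [gammaPDF_of_neg hneg])
  rw [Measure.prod_apply_symm (measurableSet_le measurable_fst measurable_snd)]
  change ∫⁻ y, gammaMeasure c r (Iic y) ∂(volume.withDensity (gammaPDF d s)) = _
  rw [lintegral_withDensity_eq_lintegral_mul _ hpdf hcdf]
  simp only [Pi.mul_apply]
  rw [← setLIntegral_eq_of_support_subset hsupp, ← setLIntegral_congr Ioi_ae_eq_Ici,
    setLIntegral_congr_fun measurableSet_Ioi fun y (hy : 0 < y) => by
      rw [gammaMeasure_Iic_eq_tsum hc hr hy.le, ← ENNReal.tsum_mul_left],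
    lintegral_tsum fun n => by fun_prop]
  exact tsum_congr fun n => setLIntegral_gammaPDF_mul_rpow_mul_exp_div_Gamma hc.le hd hr hs n

end ProbabilityTheory

/-- The series representation of the probability that the window-level F-statistic of the
naive DWGC method exceeds the threshold `1`:
`p(k) = 1 − ∑_{m=0}^∞ Γ(k+m) (1/ε₀)^{k/2+m} / ((1/ε₀+1)^{k+m} Γ(k/2) Γ(k/2+m+1))`,
and the series converges. -/
theorem naiveDWGCDetectProb_eq_one_sub_tsum (ε₀ : ℝ) (hε₀ : 1 < ε₀) (k : ℕ) (hk : 0 < k) :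
    Summable (fun m : ℕ =>
      Real.Gamma ((k : ℝ) + m) * (1 / ε₀) ^ ((k : ℝ) / 2 + m) /
        ((1 / ε₀ + 1) ^ ((k : ℝ) + m) * Real.Gamma ((k : ℝ) / 2) *
          Real.Gamma ((k : ℝ) / 2 + m + 1))) ∧
    naiveDWGCDetectProb ε₀ k =
      1 - ∑' m : ℕ,
        Real.Gamma ((k : ℝ) + m) * (1 / ε₀) ^ ((k : ℝ) / 2 + m) /
          ((1 / ε₀ + 1) ^ ((k : ℝ) + m) * Real.Gamma ((k : ℝ) / 2) *
            Real.Gamma ((k : ℝ) / 2 + m + 1)) := by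
  set T : ℕ → ℝ := fun m => Real.Gamma ((k : ℝ) + m) * (1 / ε₀) ^ ((k : ℝ) / 2 + m) /
    ((1 / ε₀ + 1) ^ ((k : ℝ) + m) * Real.Gamma ((k : ℝ) / 2) * Real.Gamma ((k : ℝ) / 2 + m + 1))
  have hε : 0 < ε₀ := by linarith
  have hc : (0 : ℝ) < k / 2 := by positivity
  have hr : (0 : ℝ) < 1 / (2 * ε₀) := by positivity
  have hT : ∀ m, 0 ≤ T m := fun m => by positivity
  have hμ : ((gammaMeasure ((k : ℝ) / 2) (1 / (2 * ε₀))).prod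
      (gammaMeasure ((k : ℝ) / 2) (1 / 2))) {q : ℝ × ℝ | q.1 ≤ q.2} =
      ∑' m, ENNReal.ofReal (T m) := by
    refine (prod_gammaMeasure_setOf_le_eq_tsum hc hc hr.le one_half_pos).trans
      (tsum_congr fun m => congrArg _ ?_)
    rw [div_add_rpow_mul_div_add_rpow hr.le one_half_pos,
      show 1 / (2 * ε₀) / (1 / 2) = 1 / ε₀ by field_simp, add_halves,
      show (k : ℝ) / 2 + m + (k : ℝ) / 2 = k + m by ring]
    ring
  have := isProbabilityMeasure_gammaMeasure hc hr
  have := isProbabilityMeasure_gammaMeasure hc one_half_pos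
  have hsum : Summable T := (ENNReal.summable_toReal (hμ ▸ measure_ne_top _ _)).congr
    fun m => ENNReal.toReal_ofReal (hT m)
  refine ⟨hsum, ?_⟩
  rw [← ENNReal.ofReal_tsum_of_nonneg hT hsum] at hμ
  have hgt : {q : ℝ × ℝ | q.1 > q.2} = {q | q.1 ≤ q.2}ᶜ := by ext; simp
  rw [naiveDWGCDetectProb, ← measureReal_def, hgt,
    probReal_compl_eq_one_sub (measurableSet_le measurable_fst measurable_snd), measureReal_def, hμ,
    ENNReal.toReal_ofReal (tsum_nonneg hT)]
end

section
/- For all real numbers p > 0, q > 0 and every y with 0 < y < 1, the incomplete beta integral satisfies ∫₀^y t^{p−1}(1−t)^{q−1} dt = y^p (1−y)^q · ∑_{m=0}^∞ (Γ(p) Γ(p+q+m)) / (Γ(p+q) Γ(p+m+1)) · y^m, where Γ is the real Gamma function and the series converges. -/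
/-!
Integrating by parts against `d(t^a (1-t)^b)` gives the recurrence
`a B_y(a, b) = y^a (1-y)^b + (a+b) B_y(a+1, b)` for `B_y(a, b) = ∫₀^y t^(a-1) (1-t)^(b-1) dt`.
The coefficients `c_m = Γ(p) Γ(p+q+m) / (Γ(p+q) Γ(p+m+1))` are characterised by `c_0 = 1/p` and
`(p+m+1) c_(m+1) = (p+q+m) c_m`, so iterating the recurrence from `a = p` writes `B_y(p, q)` as the
`N`-th partial sum of `y^p (1-y)^q ∑ c_m y^m` plus the remainder `c_N (p+N) B_y(p+N, q)`.
The remainder is nonnegative, which bounds the partial sums and gives convergence, and it is at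
most a constant times `c_N y^N`, so it tends to zero.
-/

open MeasureTheory Filter Real Topology

noncomputable def incBeta (a b y : ℝ) : ℝ :=
  ∫ t in (0 : ℝ)..y, t ^ (a - 1) * (1 - t) ^ (b - 1)

noncomputable def incBetaCoeff (p q : ℝ) (m : ℕ) : ℝ :=
  Gamma p * Gamma (p + q + m) / (Gamma (p + q) * Gamma (p + m + 1))

section IncBeta

variable {a b y : ℝ}

theorem intervalIntegrable_incBeta_integrand (ha : 0 < a) (hy : y < 1) :
    IntervalIntegrable (fun t => t ^ (a - 1) * (1 - t) ^ (b - 1)) volume 0 y := by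
  refine (intervalIntegral.intervalIntegrable_rpow' (by linarith)).mul_continuousOn ?_
  refine (continuous_const.sub continuous_id).continuousOn.rpow_const fun t ht => Or.inl ?_
  exact (sub_pos.2 (ht.2.trans_lt (max_lt one_pos hy))).ne'

theorem incBeta_nonneg (hy₀ : 0 ≤ y) (hy₁ : y ≤ 1) : 0 ≤ incBeta a b y :=
  intervalIntegral.integral_nonneg hy₀ fun t ht =>
    mul_nonneg (rpow_nonneg ht.1 _) (rpow_nonneg (by linarith [ht.2]) _)

theorem hasDerivAt_rpow_mul_one_sub_rpow {t : ℝ} (ht₀ : 0 < t) (ht₁ : t < 1) :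
    HasDerivAt (fun t => t ^ a * (1 - t) ^ b)
      (a * (t ^ (a - 1) * (1 - t) ^ (b - 1)) - (a + b) * (t ^ a * (1 - t) ^ (b - 1))) t := by
  have ht₁' : 0 < 1 - t := sub_pos.2 ht₁
  refine ((hasDerivAt_rpow_const (p := a) (Or.inl ht₀.ne')).mul
    (((hasDerivAt_id t).const_sub 1).rpow_const (p := b) (Or.inl ht₁'.ne'))).congr_deriv ?_
  have e₁ : t ^ a = t ^ (a - 1) * t := by rw [← rpow_add_one ht₀.ne', sub_add_cancel]
  have e₂ : (1 - t) ^ b = (1 - t) ^ (b - 1) * (1 - t) := by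
    rw [← rpow_add_one ht₁'.ne', sub_add_cancel]
  rw [id, e₁, e₂]
  ring

theorem mul_incBeta_eq (ha : 0 < a) (hy₀ : 0 ≤ y) (hy₁ : y < 1) :
    a * incBeta a b y = y ^ a * (1 - y) ^ b + (a + b) * incBeta (a + 1) b y := by
  have h₁ := intervalIntegrable_incBeta_integrand (b := b) ha hy₁
  have h₂ := intervalIntegrable_incBeta_integrand (b := b) (add_pos ha one_pos) hy₁
  simp only [add_sub_cancel_right] at h₂
  have hFTC := intervalIntegral.integral_eq_sub_of_hasDerivAt_of_le hy₀ ?_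
    (fun t ht => hasDerivAt_rpow_mul_one_sub_rpow (a := a) (b := b) ht.1 (ht.2.trans hy₁))
    ((h₁.const_mul a).sub (h₂.const_mul (a + b)))
  · rw [intervalIntegral.integral_sub (h₁.const_mul a) (h₂.const_mul (a + b)),
      intervalIntegral.integral_const_mul, intervalIntegral.integral_const_mul,
      zero_rpow ha.ne', zero_mul, sub_zero] at hFTC
    simp only [incBeta, add_sub_cancel_right]
    linarith
  · refine (continuousOn_id.rpow_const fun _ _ => Or.inr ha.le).mul
      ((continuous_const.sub continuous_id).continuousOn.rpow_const fun t ht => Or.inl ?_)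
    exact (sub_pos.2 (ht.2.trans_lt hy₁)).ne'

theorem mul_incBeta_le (ha : 0 < a) (hy₀ : 0 ≤ y) (hy₁ : y < 1) :
    a * incBeta a b y ≤ max 1 ((1 - y) ^ (b - 1)) * y ^ a := by
  set M := max 1 ((1 - y) ^ (b - 1))
  have hbound : ∀ t ∈ Set.Icc 0 y, t ^ (a - 1) * (1 - t) ^ (b - 1) ≤ M * t ^ (a - 1) := by
    intro t ⟨ht₀, hty⟩
    rw [mul_comm M]
    refine mul_le_mul_of_nonneg_left ?_ (rpow_nonneg ht₀ _)
    rcases le_or_gt 1 b with hb | hb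
    · exact (rpow_le_one (by linarith) (by linarith) (by linarith)).trans (le_max_left _ _)
    · exact (rpow_le_rpow_of_nonpos (by linarith) (by linarith) (by linarith)).trans
        (le_max_right _ _)
  have hmono := intervalIntegral.integral_mono_on hy₀
    (intervalIntegrable_incBeta_integrand ha hy₁)
    ((intervalIntegral.intervalIntegrable_rpow' (by linarith)).const_mul M) hbound
  rw [intervalIntegral.integral_const_mul, integral_rpow (Or.inl (by linarith)),
    sub_add_cancel, zero_rpow ha.ne', sub_zero] at hmono
  calc a * incBeta a b y ≤ a * (M * (y ^ a / a)) := mul_le_mul_of_nonneg_left hmono ha.le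
    _ = M * y ^ a := by field_simp

end IncBeta

section Coeff

variable {p q : ℝ}

theorem incBetaCoeff_pos (hp : 0 < p) (hq : 0 < q) (m : ℕ) : 0 < incBetaCoeff p q m := by
  unfold incBetaCoeff
  have := Gamma_pos_of_pos hp
  have := Gamma_pos_of_pos (by positivity : 0 < p + q + m)
  have := Gamma_pos_of_pos (by positivity : 0 < p + q)
  have := Gamma_pos_of_pos (by positivity : 0 < p + m + 1)
  positivity

theorem incBetaCoeff_zero (hp : 0 < p) (hq : 0 < q) : incBetaCoeff p q 0 = p⁻¹ := by
  have := (Gamma_pos_of_pos hp).ne'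
  have := (Gamma_pos_of_pos (add_pos hp hq)).ne'
  simp only [incBetaCoeff, Nat.cast_zero, add_zero, Gamma_add_one hp.ne']
  field_simp

theorem incBetaCoeff_succ_mul (hp : 0 < p) (hq : 0 < q) (m : ℕ) :
    incBetaCoeff p q (m + 1) * (p + m + 1) = incBetaCoeff p q m * (p + q + m) := by
  have hpqm : 0 < p + q + m := by positivity
  have hpm : 0 < p + m + 1 := by positivity
  have := (Gamma_pos_of_pos hpm).ne'
  have := (Gamma_pos_of_pos (add_pos hp hq)).ne'
  simp only [incBetaCoeff, Nat.cast_succ, ← add_assoc, Gamma_add_one hpqm.ne',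
    Gamma_add_one hpm.ne']
  field_simp

end Coeff

section Series

variable {p q y : ℝ}

theorem incBeta_eq_sum_add (hp : 0 < p) (hq : 0 < q) (hy₀ : 0 ≤ y) (hy₁ : y < 1) (N : ℕ) :
    incBeta p q y = y ^ p * (1 - y) ^ q * ∑ m ∈ Finset.range N, incBetaCoeff p q m * y ^ m
      + incBetaCoeff p q N * ((p + N) * incBeta (p + N) q y) := by
  induction N with
  | zero => simp [incBetaCoeff_zero hp hq, hp.ne']
  | succ N ih =>
    have hstep := mul_incBeta_eq (b := q) (by positivity : 0 < p + N) hy₀ hy₁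
    rw [rpow_add' hy₀ (by positivity : (0 : ℝ) < p + N).ne', rpow_natCast] at hstep
    rw [ih, Finset.sum_range_succ, Nat.cast_succ, ← add_assoc]
    linear_combination incBetaCoeff p q N * hstep
      - incBeta (p + N + 1) q y * incBetaCoeff_succ_mul hp hq N

theorem incBeta_remainder_nonneg (hp : 0 < p) (hq : 0 < q) (hy₀ : 0 ≤ y) (hy₁ : y ≤ 1) (N : ℕ) :
    0 ≤ incBetaCoeff p q N * ((p + N) * incBeta (p + N) q y) :=
  mul_nonneg (incBetaCoeff_pos hp hq N).le (mul_nonneg (by positivity) (incBeta_nonneg hy₀ hy₁))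

theorem summable_incBetaCoeff_mul_pow (hp : 0 < p) (hq : 0 < q) (hy₀ : 0 < y) (hy₁ : y < 1) :
    Summable fun m => incBetaCoeff p q m * y ^ m := by
  have hC : 0 < y ^ p * (1 - y) ^ q := by have := sub_pos.2 hy₁; positivity
  refine summable_of_sum_range_le (c := incBeta p q y / (y ^ p * (1 - y) ^ q))
    (fun m => by have := incBetaCoeff_pos hp hq m; positivity) fun N => ?_
  rw [le_div_iff₀' hC]
  linarith [incBeta_eq_sum_add hp hq hy₀.le hy₁ N,
    incBeta_remainder_nonneg hp hq hy₀.le hy₁.le N]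

theorem tendsto_incBeta_remainder (hp : 0 < p) (hq : 0 < q) (hy₀ : 0 < y) (hy₁ : y < 1) :
    Tendsto (fun N : ℕ => incBetaCoeff p q N * ((p + N) * incBeta (p + N) q y)) atTop (𝓝 0) := by
  set M := max 1 ((1 - y) ^ (q - 1))
  have hbound (N : ℕ) : incBetaCoeff p q N * ((p + N) * incBeta (p + N) q y)
      ≤ M * y ^ p * (incBetaCoeff p q N * y ^ N) := by
    have h := mul_incBeta_le (b := q) (by positivity : 0 < p + N) hy₀.le hy₁
    rw [rpow_add hy₀, rpow_natCast] at h
    calc _ ≤ incBetaCoeff p q N * (M * (y ^ p * y ^ N)) :=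
          mul_le_mul_of_nonneg_left h (incBetaCoeff_pos hp hq N).le
      _ = _ := by ring
  refine squeeze_zero (incBeta_remainder_nonneg hp hq hy₀.le hy₁.le) hbound ?_
  simpa using
    (summable_incBetaCoeff_mul_pow hp hq hy₀ hy₁).tendsto_atTop_zero.const_mul (M * y ^ p)

theorem incBeta_eq_mul_tsum (hp : 0 < p) (hq : 0 < q) (hy₀ : 0 < y) (hy₁ : y < 1) :
    incBeta p q y = y ^ p * (1 - y) ^ q * ∑' m, incBetaCoeff p q m * y ^ m := by
  have hpartial := ((summable_incBetaCoeff_mul_pow hp hq hy₀ hy₁).hasSum.tendsto_sum_nat.const_mul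
    (y ^ p * (1 - y) ^ q)).add (tendsto_incBeta_remainder hp hq hy₀ hy₁)
  rw [add_zero] at hpartial
  exact tendsto_nhds_unique
    (tendsto_const_nhds.congr (incBeta_eq_sum_add hp hq hy₀.le hy₁)) hpartial

end Series

/-- Series expansion of the (unregularized) incomplete beta function: for `p, q > 0` and
`0 < y < 1`,
`∫₀^y t^{p−1}(1−t)^{q−1} dt = y^p (1−y)^q ∑_{m=0}^∞ (Γ(p) Γ(p+q+m))/(Γ(p+q) Γ(p+m+1)) y^m`,
and the series converges. -/
theorem incompleteBeta_series (p q : ℝ) (hp : 0 < p) (hq : 0 < q)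
    (y : ℝ) (hy₀ : 0 < y) (hy₁ : y < 1) :
    Summable (fun m : ℕ =>
      Real.Gamma p * Real.Gamma (p + q + m) /
        (Real.Gamma (p + q) * Real.Gamma (p + m + 1)) * y ^ m) ∧
    ∫ t in (0 : ℝ)..y, t ^ (p - 1) * (1 - t) ^ (q - 1) =
      y ^ p * (1 - y) ^ q *
        ∑' m : ℕ, Real.Gamma p * Real.Gamma (p + q + m) /
          (Real.Gamma (p + q) * Real.Gamma (p + m + 1)) * y ^ m :=
  ⟨summable_incBetaCoeff_mul_pow hp hq hy₀ hy₁, incBeta_eq_mul_tsum hp hq hy₀ hy₁⟩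
end
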